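/- arXiv:1605.04517 — 3 statements merged into one kernel-verified Lean document; each statement's English description precedes it below -/
import Mathlib

section
/- Hypergeometric (Jacobi polynomial) form of the β-coefficients: for every natural number n ≥ 2, every N ∈ ℕ, every λ ∈ ℂ and every i with 0 ≤ i ≤ N, one has β_i^{(N)}(λ) · i! · (1 − λ − n/2)_i = 4^N · (N!/(2N+1)!) · (λ + n/2 − N)_N · (−N)_i · (N + 3/2 − λ − n/2)_i. (Whenever the Pochhammer symbols (1−λ−n/2)_i are nonzero, this says that Σ_{i=0}^{N} β_i^{(N)}(λ) t^i equals the terminating hypergeometric polynomial 4^N (N!/(2N+1)!)(λ+n/2−N)_N · ₂F₁(−N, N+3/2−λ−n/2; 1−λ−n/2; t).) -/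
open Finset Polynomial

noncomputable def aC (n N j : ℕ) (l : ℂ) : ℂ :=
  (-2 : ℂ) ^ (N - j) *
    ((N.factorial : ℂ) / ((j.factorial : ℂ) * ((2 * N - 2 * j).factorial : ℂ))) *
    ∏ k ∈ Finset.Ico j N, (2 * l - 4 * (N : ℂ) + 2 * (k : ℂ) + (n : ℂ) + 1)

noncomputable def bC (n N j : ℕ) (l : ℂ) : ℂ :=
  (-2 : ℂ) ^ (N - j) *
    ((N.factorial : ℂ) / ((j.factorial : ℂ) * ((2 * N - 2 * j + 1).factorial : ℂ))) *
    ∏ k ∈ Finset.Ico j N, (2 * l - 4 * (N : ℂ) + 2 * (k : ℂ) + (n : ℂ) - 1)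

noncomputable def bCZ (n M : ℕ) (j : ℤ) (l : ℂ) : ℂ :=
  if 0 ≤ j ∧ j ≤ (M : ℤ) then bC n M j.toNat l else 0

noncomputable def alphaC (n N i : ℕ) (l : ℂ) : ℂ :=
  (-1 : ℂ) ^ i * 2 ^ N * ((N.factorial : ℂ) / ((2 * N).factorial : ℂ)) * (N.choose i : ℂ) *
    (∏ k ∈ Finset.Icc (i + 1) N, (2 * l + (n : ℂ) - 2 * (k : ℂ))) *
    ∏ k ∈ Finset.Icc 1 i, (2 * l + (n : ℂ) - 2 * (k : ℂ) - 2 * (N : ℂ) + 1)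

noncomputable def betaC (n N i : ℕ) (l : ℂ) : ℂ :=
  (-1 : ℂ) ^ i * 2 ^ N * ((N.factorial : ℂ) / ((2 * N + 1).factorial : ℂ)) * (N.choose i : ℂ) *
    (∏ k ∈ Finset.Icc (i + 1) N, (2 * l + (n : ℂ) - 2 * (k : ℂ))) *
    ∏ k ∈ Finset.Icc 1 i, (2 * l + (n : ℂ) - 2 * (k : ℂ) - 2 * (N : ℂ) - 1)

noncomputable def gammaC (n N i : ℕ) (l p : ℂ) : ℂ :=
  (-1 : ℂ) ^ i * 2 ^ N *
    ((N.factorial : ℂ) / (((N : ℂ) + 1) * ((2 * N + 1).factorial : ℂ))) *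
    ((N + 1).choose i : ℂ) *
    ((l + p - 2 * (N : ℂ) - 1) * ((N : ℂ) + 1) * (2 * l + (n : ℂ) - 2 * (i : ℂ)) +
      (l + (n : ℂ) - p) * (2 * (N : ℂ) + 1) * ((N : ℂ) - (i : ℂ) + 1)) *
    (∏ k ∈ Finset.Icc (i + 1) N, (2 * l + (n : ℂ) - 2 * (k : ℂ))) *
    ∏ k ∈ Finset.Icc 1 (i - 1), (2 * l + (n : ℂ) - 2 * (k : ℂ) - 2 * (N : ℂ) - 1)

noncomputable def poch (a : ℂ) (l : ℕ) : ℂ :=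
  ∏ m ∈ Finset.range l, (a + (m : ℂ))


lemma poch_succ' (b : ℂ) (m : ℕ) : poch b (m + 1) = b * poch (b + 1) m := by
  unfold poch
  rw [Finset.prod_range_succ']
  rw [Finset.prod_congr rfl (fun x _ => show b + ((x + 1 : ℕ) : ℂ) = (b + 1) + (x : ℂ) by
    push_cast; ring)]
  simp [mul_comm]

lemma prodA (a : ℂ) (i : ℕ) :
    poch (1 - a / 2) i = (-1 / 2) ^ i * ∏ k ∈ Finset.Icc 1 i, (a - 2 * (k : ℂ)) := by
  induction i with
  | zero => simp [poch]
  | succ i ih =>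
    rw [show poch (1 - a / 2) (i + 1)
        = poch (1 - a / 2) i * (1 - a / 2 + (i : ℂ)) from Finset.prod_range_succ _ _,
      Finset.prod_Icc_succ_top (Nat.succ_le_succ (Nat.zero_le i)), ih]
    push_cast
    ring

lemma prodC (a : ℂ) (N : ℕ) :
    ∏ k ∈ Finset.Icc 1 N, (a - 2 * (k : ℂ)) = 2 ^ N * poch (a / 2 - (N : ℂ)) N := by
  induction N with
  | zero => simp [poch]
  | succ N ih =>
    rw [Finset.prod_Icc_succ_top (Nat.succ_le_succ (Nat.zero_le N)), ih, poch_succ']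
    rw [show a / 2 - ((N + 1 : ℕ) : ℂ) + 1 = a / 2 - (N : ℂ) by push_cast; ring]
    push_cast
    ring

lemma pochNeg (N : ℕ) : ∀ i ≤ N,
    poch (-(N : ℂ)) i = (-1) ^ i * (N.choose i : ℂ) * (i.factorial : ℂ) := by
  intro i
  induction i with
  | zero => simp [poch]
  | succ i ih =>
    intro h
    have hiN : i ≤ N := Nat.le_of_succ_le h
    have hc : ((N.choose (i + 1) : ℂ)) * ((i : ℂ) + 1)
        = (N.choose i : ℂ) * ((N : ℂ) - (i : ℂ)) := by
      have := Nat.choose_succ_right_eq N i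
      have h2 : ((N.choose (i + 1) * (i + 1) : ℕ) : ℂ) = ((N.choose i * (N - i) : ℕ) : ℂ) := by
        exact_mod_cast congrArg (Nat.cast : ℕ → ℂ) this
      push_cast [Nat.cast_sub hiN] at h2
      linear_combination h2
    have hstep : poch (-(N : ℂ)) (i + 1)
        = poch (-(N : ℂ)) i * (-(N : ℂ) + (i : ℂ)) := Finset.prod_range_succ _ _
    rw [hstep, ih hiN]
    push_cast [Nat.factorial_succ]
    linear_combination ((-1 : ℂ)) ^ i * (i.factorial : ℂ) * hc

theorem beta_hypergeometric_form (n : ℕ) (hn : 2 ≤ n) (N : ℕ) (l : ℂ)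
    (i : ℕ) (hi : i ≤ N) :
    betaC n N i l * (i.factorial : ℂ) * poch (1 - l - (n : ℂ) / 2) i
      = 4 ^ N * ((N.factorial : ℂ) / ((2 * N + 1).factorial : ℂ)) *
          poch (l + (n : ℂ) / 2 - (N : ℂ)) N * poch (-(N : ℂ)) i *
          poch ((N : ℂ) + 3 / 2 - l - (n : ℂ) / 2) i := by
  have h1 : poch (1 - l - (n : ℂ) / 2) i
      = (-1 / 2) ^ i * ∏ k ∈ Finset.Icc 1 i, (2 * l + (n : ℂ) - 2 * (k : ℂ)) := by
    have h := prodA (2 * l + (n : ℂ)) i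
    rw [show (1 : ℂ) - (2 * l + (n : ℂ)) / 2 = 1 - l - (n : ℂ) / 2 by ring] at h
    exact h
  have h2 : poch ((N : ℂ) + 3 / 2 - l - (n : ℂ) / 2) i
      = (-1 / 2) ^ i
        * ∏ k ∈ Finset.Icc 1 i, (2 * l + (n : ℂ) - 2 * (k : ℂ) - 2 * (N : ℂ) - 1) := by
    have h := prodA (2 * l + (n : ℂ) - 2 * (N : ℂ) - 1) i
    rw [show (1 : ℂ) - (2 * l + (n : ℂ) - 2 * (N : ℂ) - 1) / 2
        = (N : ℂ) + 3 / 2 - l - (n : ℂ) / 2 by ring] at h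
    rw [h]
    exact congrArg _ (Finset.prod_congr rfl fun k _ => by ring)
  have hsplit : (∏ k ∈ Finset.Icc 1 i, (2 * l + (n : ℂ) - 2 * (k : ℂ)))
      * ∏ k ∈ Finset.Icc (i + 1) N, (2 * l + (n : ℂ) - 2 * (k : ℂ))
      = ∏ k ∈ Finset.Icc 1 N, (2 * l + (n : ℂ) - 2 * (k : ℂ)) := by
    rw [show Finset.Icc 1 i = Finset.Ioc 0 i from Finset.Icc_add_one_left_eq_Ioc 0 i,
      show Finset.Icc (i + 1) N = Finset.Ioc i N from Finset.Icc_add_one_left_eq_Ioc i N,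
      show Finset.Icc 1 N = Finset.Ioc 0 N from Finset.Icc_add_one_left_eq_Ioc 0 N]
    exact Finset.prod_Ioc_consecutive _ (Nat.zero_le i) hi
  have h3 : (2 : ℂ) ^ N * poch (l + (n : ℂ) / 2 - (N : ℂ)) N
      = (∏ k ∈ Finset.Icc 1 i, (2 * l + (n : ℂ) - 2 * (k : ℂ)))
        * ∏ k ∈ Finset.Icc (i + 1) N, (2 * l + (n : ℂ) - 2 * (k : ℂ)) := by
    have h := prodC (2 * l + (n : ℂ)) N
    rw [show (2 * l + (n : ℂ)) / 2 - (N : ℂ) = l + (n : ℂ) / 2 - (N : ℂ) by ring] at h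
    rw [hsplit, ← h]
  have h4 := pochNeg N i hi
  have h5 : (4 : ℂ) ^ N = 2 ^ N * 2 ^ N := by
    rw [show (4 : ℂ) = 2 * 2 by norm_num, mul_pow]
  unfold betaC
  rw [h1, h2, h4, h5]
  linear_combination
    (-((-1 : ℂ) ^ i * 2 ^ N * ((N.factorial : ℂ) / ((2 * N + 1).factorial : ℂ))
      * (N.choose i : ℂ) * (i.factorial : ℂ) * (-1 / 2) ^ i
      * ∏ k ∈ Finset.Icc 1 i, (2 * l + (n : ℂ) - 2 * (k : ℂ) - 2 * (N : ℂ) - 1))) * h3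
end

section
/- Gegenbauer solution of the even singular-vector system (existence part of Theorem 3.3/EvenFromPtoP): let n ∈ ℕ with n ≥ 2, let N ∈ ℕ, let p ∈ ℕ with p ≤ n−1, and let λ ∈ ℂ. Define polynomials P, Q, R ∈ ℂ[t] by P(t) := (λ+p−2N)·Σ_{j=0}^{N} a_j^{(N)}(λ) t^j, Q(t) := −2N·(2λ+n−2N−1)·Σ_{j=0}^{N−1} b_j^{(N−1)}(λ−1) t^j, and R(t) := 2N·Σ_{j=0}^{N−1} a_j^{(N−1)}(λ−1) t^j (Q := 0 and R := 0 if N = 0). Then, with ' denoting the formal polynomial derivative, the following six identities hold in ℂ[t]: (1) 2t(t+1)P'' + (3−4N)tP' + (2λ+n−4N+1)P' + N(2N−1)P = 0; (2) 2P' + (2N−1)Q − 2tQ' + 2tR' + (λ+n−p−2N+1)R = 0; (3) −2P' + (λ+p−2N)R = 0; (4) 2tP' − 2N·P + (λ+p−2N)Q = 0; (5) 2t(t+1)Q'' + (5−4N)tQ' + (2λ+n−4N+3)Q' + (N−1)(2N−1)Q + 2tR' − (2N−2)R = 0; (6) 2t(t+1)R'' + (7−4N)tR' + (2λ+n−4N+3)R'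 + (N−1)(2N−3)R = 0. -/
open Finset Polynomial

/-! The three polynomials are constant multiples of `A_N(λ)`, `B_{N-1}(λ-1)` and `A_{N-1}(λ-1)`,
where `A_M(λ) = Σ_j a_j^{(M)}(λ) t^j` and `B_M(λ) = Σ_j b_j^{(M)}(λ) t^j`. Both families solve
a hypergeometric equation `2t(t+1)f'' + (αt + β)f' + γf = 0`, which on coefficients is a two-term
recurrence, and they are linked by first-order contiguous relations such as
`A_{M+1}(λ)' = (M+1) A_M(λ-1)`; each of these is an identity between neighbouring coefficients,
i.e. a ratio of factorials times a shifted product. The six identities are then linear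
combinations of these seven polynomial identities. -/

theorem aC_recurrence (n M j : ℕ) (hj : j < M) (l : ℂ) :
    ((j : ℂ) + 1) * (2 * l + n - 4 * M + 2 * j + 1) * aC n M (j + 1) l
      + (2 * (M : ℂ) - 2 * j - 1) * (M - j) * aC n M j l = 0 := by
  obtain ⟨e, rfl⟩ := Nat.exists_eq_add_of_lt hj
  simp only [aC, prod_eq_prod_Ico_succ_bot hj, show j + e + 1 - (j + 1) = e by omega,
    show j + e + 1 - j = e + 1 by omega, show 2 * (j + e + 1) - 2 * (j + 1) = 2 * e by omega,
    show 2 * (j + e + 1) - 2 * j = 2 * e + 1 + 1 by omega, Nat.factorial_succ, Nat.cast_mul]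
  have h₁ : ((2 * e + 1 : ℕ) : ℂ) ≠ 0 := Nat.cast_ne_zero.mpr (by omega)
  have h₂ : ((2 * e + 1 + 1 : ℕ) : ℂ) ≠ 0 := Nat.cast_ne_zero.mpr (by omega)
  field_simp [Nat.factorial_ne_zero]
  push_cast
  ring

theorem bC_recurrence (n M j : ℕ) (hj : j < M) (l : ℂ) :
    ((j : ℂ) + 1) * (2 * l + n - 4 * M + 2 * j - 1) * bC n M (j + 1) l
      + (2 * (M : ℂ) - 2 * j + 1) * (M - j) * bC n M j l = 0 := by
  obtain ⟨e, rfl⟩ := Nat.exists_eq_add_of_lt hj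
  simp only [bC, prod_eq_prod_Ico_succ_bot hj, show j + e + 1 - (j + 1) = e by omega,
    show j + e + 1 - j = e + 1 by omega,
    show 2 * (j + e + 1) - 2 * (j + 1) + 1 = 2 * e + 1 by omega,
    show 2 * (j + e + 1) - 2 * j + 1 = 2 * e + 1 + 1 + 1 by omega, Nat.factorial_succ, Nat.cast_mul]
  have h₂ : ((2 * e + 1 + 1 : ℕ) : ℂ) ≠ 0 := Nat.cast_ne_zero.mpr (by omega)
  have h₃ : ((2 * e + 1 + 1 + 1 : ℕ) : ℂ) ≠ 0 := Nat.cast_ne_zero.mpr (by omega)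
  field_simp [Nat.factorial_ne_zero]
  push_cast
  ring

theorem succ_mul_aC_succ (n M j : ℕ) (hj : j ≤ M) (l : ℂ) :
    ((j : ℂ) + 1) * aC n (M + 1) (j + 1) l = ((M : ℂ) + 1) * aC n M j (l - 1) := by
  obtain ⟨e, rfl⟩ := Nat.exists_eq_add_of_le hj
  have hshift :
      ∏ k ∈ Ico (j + 1) (j + e + 1), (2 * l - 4 * ((j + e + 1 : ℕ) : ℂ) + 2 * k + n + 1)
      = ∏ k ∈ Ico j (j + e), (2 * (l - 1) - 4 * ((j + e : ℕ) : ℂ) + 2 * k + n + 1) := by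
    rw [← prod_Ico_add']
    exact prod_congr rfl fun k _ => by push_cast; ring
  simp only [aC, hshift, show j + e + 1 - (j + 1) = e by omega, show j + e - j = e by omega,
    show 2 * (j + e + 1) - 2 * (j + 1) = 2 * e by omega,
    show 2 * (j + e) - 2 * j = 2 * e by omega, Nat.factorial_succ, Nat.cast_mul]
  field_simp [Nat.factorial_ne_zero]
  push_cast
  ring

theorem sub_mul_aC_succ (n M j : ℕ) (hj : j ≤ M) (l : ℂ) :
    ((j : ℂ) - (M + 1)) * aC n (M + 1) j l
      = ((M : ℂ) + 1) * (2 * l + n - 2 * M - 3) * bC n M j (l - 1) := by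
  obtain ⟨e, rfl⟩ := Nat.exists_eq_add_of_le hj
  set g : ℕ → ℂ := fun k => 2 * l - 4 * ((j + e : ℕ) : ℂ) + 2 * k + n - 3 with hg
  have hprod_a :
      ∏ k ∈ Ico j (j + e + 1), (2 * l - 4 * ((j + e + 1 : ℕ) : ℂ) + 2 * k + n + 1)
      = (∏ k ∈ Ico j (j + e), g k) * g (j + e) := by
    rw [← prod_Ico_succ_top (by omega)]
    exact prod_congr rfl fun k _ => by simp only [g]; push_cast; ring
  have hprod_b : ∏ k ∈ Ico j (j + e), (2 * (l - 1) - 4 * ((j + e : ℕ) : ℂ) + 2 * k + n - 1)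
      = ∏ k ∈ Ico j (j + e), g k :=
    prod_congr rfl fun k _ => by simp only [g]; ring
  simp only [aC, bC, hprod_a, hprod_b, show j + e + 1 - j = e + 1 by omega,
    show j + e - j = e by omega, show 2 * (j + e + 1) - 2 * j = 2 * e + 1 + 1 by omega,
    show 2 * (j + e) - 2 * j + 1 = 2 * e + 1 by omega, Nat.factorial_succ, Nat.cast_mul]
  have h₂ : ((2 * e + 1 + 1 : ℕ) : ℂ) ≠ 0 := Nat.cast_ne_zero.mpr (by omega)
  field_simp [Nat.factorial_ne_zero]
  simp only [hg]
  push_cast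
  ring

theorem mul_aC_eq_mul_bC (n M j : ℕ) (hj : j ≤ M) (l : ℂ) :
    (2 * l + n - 4 * M + 2 * j - 1) * aC n M j l
      = (2 * (M : ℂ) - 2 * j + 1) * (2 * l + n - 2 * M - 1) * bC n M j l := by
  obtain ⟨e, rfl⟩ := Nat.exists_eq_add_of_le hj
  set g : ℕ → ℂ := fun k => 2 * l - 4 * ((j + e : ℕ) : ℂ) + 2 * k + n - 1 with hg
  have hshift : ∏ k ∈ Ico j (j + e), (2 * l - 4 * ((j + e : ℕ) : ℂ) + 2 * k + n + 1)
      = ∏ k ∈ Ico (j + 1) (j + e + 1), g k := by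
    rw [← prod_Ico_add']
    exact prod_congr rfl fun k _ => by simp only [g]; push_cast; ring
  have hprod : g j * ∏ k ∈ Ico (j + 1) (j + e + 1), g k
      = (∏ k ∈ Ico j (j + e), g k) * g (j + e) := by
    rw [← prod_eq_prod_Ico_succ_bot (by omega), prod_Ico_succ_top (by omega)]
  simp only [aC, bC, hshift, show j + e - j = e by omega,
    show 2 * (j + e) - 2 * j = 2 * e by omega, Nat.factorial_succ, Nat.cast_mul]
  have h₁ : ((2 * e + 1 : ℕ) : ℂ) ≠ 0 := Nat.cast_ne_zero.mpr (by omega)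
  field_simp [Nat.factorial_ne_zero]
  simp only [hg] at hprod ⊢
  push_cast at hprod ⊢
  linear_combination (2 * (e : ℂ) + 1) * hprod

theorem bC_succ_add_aC (n M j : ℕ) (hj : j < M) (l : ℂ) :
    ((j : ℂ) + 1) * (2 * l + n - 2 * M - 1) * bC n M (j + 1) l
      + ((M : ℂ) - j) * aC n M j l = 0 := by
  obtain ⟨e, rfl⟩ := Nat.exists_eq_add_of_lt hj
  set g : ℕ → ℂ := fun k => 2 * l - 4 * ((j + e + 1 : ℕ) : ℂ) + 2 * k + n - 1
  have hprod : ∏ k ∈ Ico j (j + e + 1), (2 * l - 4 * ((j + e + 1 : ℕ) : ℂ) + 2 * k + n + 1)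
      = (∏ k ∈ Ico (j + 1) (j + e + 1), g k) * g (j + e + 1) := by
    rw [← prod_Ico_succ_top (by omega), ← prod_Ico_add']
    exact prod_congr rfl fun k _ => by simp only [g]; push_cast; ring
  have hprod_b :
      ∏ k ∈ Ico (j + 1) (j + e + 1), (2 * l - 4 * ((j + e + 1 : ℕ) : ℂ) + 2 * k + n - 1)
      = ∏ k ∈ Ico (j + 1) (j + e + 1), g k := rfl
  have hg : g (j + e + 1) = 2 * l + n - 2 * ((j + e + 1 : ℕ) : ℂ) - 1 := by simp only [g]; ring
  simp only [aC, bC, hprod, hprod_b, hg, show j + e + 1 - (j + 1) = e by omega,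
    show j + e + 1 - j = e + 1 by omega,
    show 2 * (j + e + 1) - 2 * (j + 1) + 1 = 2 * e + 1 by omega,
    show 2 * (j + e + 1) - 2 * j = 2 * e + 1 + 1 by omega, Nat.factorial_succ, Nat.cast_mul]
  have h₂ : ((2 * e + 1 + 1 : ℕ) : ℂ) ≠ 0 := Nat.cast_ne_zero.mpr (by omega)
  field_simp [Nat.factorial_ne_zero]
  push_cast
  ring

noncomputable def evenGegenbauer (n N : ℕ) (l : ℂ) : ℂ[X] :=
  ∑ j ∈ range (N + 1), C (aC n N j l) * X ^ j

noncomputable def oddGegenbauer (n N : ℕ) (l : ℂ) : ℂ[X] :=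
  ∑ j ∈ range (N + 1), C (bC n N j l) * X ^ j

theorem coeff_evenGegenbauer (n N : ℕ) (l : ℂ) (j : ℕ) :
    (evenGegenbauer n N l).coeff j = if j ≤ N then aC n N j l else 0 := by
  simp [evenGegenbauer]

theorem coeff_oddGegenbauer (n N : ℕ) (l : ℂ) (j : ℕ) :
    (oddGegenbauer n N l).coeff j = if j ≤ N then bC n N j l else 0 := by
  simp [oddGegenbauer]

theorem coeff_X_mul_derivative {R : Type*} [Semiring R] (f : R[X]) (m : ℕ) :
    (X * derivative f).coeff m = m * f.coeff m := by
  cases m with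
  | zero => simp
  | succ m => rw [coeff_X_mul, coeff_derivative, ← Nat.cast_succ, Nat.cast_comm]

noncomputable def gegenbauerOperator {R : Type*} [CommRing R] (α β γ : R) (f : R[X]) : R[X] :=
  C 2 * X * (X + 1) * derivative (derivative f) + C α * X * derivative f
    + C β * derivative f + C γ * f

theorem coeff_gegenbauerOperator {R : Type*} [CommRing R] (α β γ : R) (f : R[X]) (m : ℕ) :
    (gegenbauerOperator α β γ f).coeff m
      = (m + 1) * (2 * m + β) * f.coeff (m + 1) + (2 * m ^ 2 + (α - 2) * m + γ) * f.coeff m := by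
  -- `θ = X * derivative` multiplies `X ^ m` by `m`, and `X ^ 2 * f'' = θ (θ f) - θ f`.
  have hsplit : gegenbauerOperator α β γ f
      = C 2 * (X * derivative (X * derivative f)) + C (α - 2) * (X * derivative f)
        + C 2 * (X * derivative (derivative f)) + C β * derivative f + C γ * f := by
    simp only [gegenbauerOperator, derivative_mul, derivative_X, map_sub]
    ring
  rw [hsplit]
  simp only [coeff_add, coeff_C_mul, coeff_X_mul_derivative, coeff_derivative]
  ring

theorem gegenbauerOperator_evenGegenbauer (n M : ℕ) (l : ℂ) :
    gegenbauerOperator (3 - 4 * (M : ℂ)) (2 * l + n - 4 * M + 1) (M * (2 * M - 1))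
      (evenGegenbauer n M l) = 0 := by
  ext m
  rw [coeff_gegenbauerOperator, coeff_evenGegenbauer, coeff_evenGegenbauer, coeff_zero]
  rcases lt_trichotomy m M with hm | rfl | hm
  · rw [if_pos (Nat.succ_le_of_lt hm), if_pos hm.le]
    linear_combination aC_recurrence n M m hm l
  · rw [if_neg (Nat.not_succ_le_self m), if_pos le_rfl]
    ring
  · simp [show ¬ m + 1 ≤ M by omega, show ¬ m ≤ M by omega]

theorem gegenbauerOperator_oddGegenbauer (n M : ℕ) (l : ℂ) :
    gegenbauerOperator (1 - 4 * (M : ℂ)) (2 * l + n - 4 * M - 1) (M * (2 * M + 1))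
      (oddGegenbauer n M l) = 0 := by
  ext m
  rw [coeff_gegenbauerOperator, coeff_oddGegenbauer, coeff_oddGegenbauer, coeff_zero]
  rcases lt_trichotomy m M with hm | rfl | hm
  · rw [if_pos (Nat.succ_le_of_lt hm), if_pos hm.le]
    linear_combination bC_recurrence n M m hm l
  · rw [if_neg (Nat.not_succ_le_self m), if_pos le_rfl]
    ring
  · simp [show ¬ m + 1 ≤ M by omega, show ¬ m ≤ M by omega]

theorem derivative_evenGegenbauer_succ (n M : ℕ) (l : ℂ) :
    derivative (evenGegenbauer n (M + 1) l) = C ((M : ℂ) + 1) * evenGegenbauer n M (l - 1) := by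
  ext m
  rw [coeff_derivative, coeff_C_mul, coeff_evenGegenbauer, coeff_evenGegenbauer]
  by_cases hm : m ≤ M
  · rw [if_pos (by omega), if_pos hm]
    linear_combination succ_mul_aC_succ n M m hm l
  · simp [hm]

theorem X_mul_derivative_evenGegenbauer_succ_sub (n M : ℕ) (l : ℂ) :
    X * derivative (evenGegenbauer n (M + 1) l) - C ((M : ℂ) + 1) * evenGegenbauer n (M + 1) l
      = C (((M : ℂ) + 1) * (2 * l + n - 2 * M - 3)) * oddGegenbauer n M (l - 1) := by
  ext m
  rw [coeff_sub, coeff_X_mul_derivative, coeff_C_mul, coeff_C_mul, coeff_evenGegenbauer,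
    coeff_oddGegenbauer]
  rcases lt_trichotomy m (M + 1) with hm | rfl | hm
  · rw [if_pos hm.le, if_pos (by omega)]
    linear_combination sub_mul_aC_succ n M m (by omega) l
  · simp
  · simp [show ¬ m ≤ M + 1 by omega, show ¬ m ≤ M by omega]

theorem two_X_mul_derivative_evenGegenbauer_add (n M : ℕ) (l : ℂ) :
    C 2 * X * derivative (evenGegenbauer n M l) + C (2 * l + n - 4 * M - 1) * evenGegenbauer n M l
      = C (2 * l + n - 2 * M - 1)
        * (C (2 * (M : ℂ) + 1) * oddGegenbauer n M l
          - C 2 * X * derivative (oddGegenbauer n M l)) := by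
  ext m
  simp only [mul_assoc, coeff_add, coeff_sub, coeff_C_mul, coeff_X_mul_derivative,
    coeff_evenGegenbauer, coeff_oddGegenbauer]
  by_cases hm : m ≤ M
  · rw [if_pos hm, if_pos hm]
    linear_combination mul_aC_eq_mul_bC n M m hm l
  · simp [hm]

theorem X_mul_derivative_evenGegenbauer (n M : ℕ) (l : ℂ) :
    X * derivative (evenGegenbauer n M l)
      = C (2 * l + n - 2 * M - 1) * derivative (oddGegenbauer n M l)
        + C (M : ℂ) * evenGegenbauer n M l := by
  ext m
  rw [coeff_add, coeff_X_mul_derivative, coeff_C_mul, coeff_C_mul, coeff_derivative,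
    coeff_evenGegenbauer, coeff_oddGegenbauer]
  rcases lt_trichotomy m M with hm | rfl | hm
  · rw [if_pos hm.le, if_pos (Nat.succ_le_of_lt hm)]
    linear_combination -bC_succ_add_aC n M m hm l
  · simp
  · simp [show ¬ m + 1 ≤ M by omega, show ¬ m ≤ M by omega]

theorem even_singular_vector_system_existence_general (n : ℕ) (N : ℕ)
    (p : ℕ) (l : ℂ) :
    ∀ P Q R : Polynomial ℂ,
      P = Polynomial.C (l + (p : ℂ) - 2 * (N : ℂ)) *
            ∑ j ∈ Finset.range (N + 1), Polynomial.C (aC n N j l) * Polynomial.X ^ j →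
      Q = Polynomial.C (-(2 * (N : ℂ)) * (2 * l + (n : ℂ) - 2 * (N : ℂ) - 1)) *
            ∑ j ∈ Finset.range N, Polynomial.C (bC n (N - 1) j (l - 1)) * Polynomial.X ^ j →
      R = Polynomial.C (2 * (N : ℂ)) *
            ∑ j ∈ Finset.range N, Polynomial.C (aC n (N - 1) j (l - 1)) * Polynomial.X ^ j →
      (C 2 * X * (X + 1) * derivative (derivative P) + C (3 - 4 * (N : ℂ)) * X * derivative P
          + C (2 * l + (n : ℂ) - 4 * (N : ℂ) + 1) * derivative P
          + C ((N : ℂ) * (2 * (N : ℂ) - 1)) * P = 0) ∧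
      (C 2 * derivative P + C (2 * (N : ℂ) - 1) * Q - C 2 * X * derivative Q
          + C 2 * X * derivative R + C (l + (n : ℂ) - (p : ℂ) - 2 * (N : ℂ) + 1) * R = 0) ∧
      (-(C 2 * derivative P) + C (l + (p : ℂ) - 2 * (N : ℂ)) * R = 0) ∧
      (C 2 * X * derivative P - C (2 * (N : ℂ)) * P
          + C (l + (p : ℂ) - 2 * (N : ℂ)) * Q = 0) ∧
      (C 2 * X * (X + 1) * derivative (derivative Q) + C (5 - 4 * (N : ℂ)) * X * derivative Q
          + C (2 * l + (n : ℂ) - 4 * (N : ℂ) + 3) * derivative Q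
          + C (((N : ℂ) - 1) * (2 * (N : ℂ) - 1)) * Q
          + C 2 * X * derivative R - C (2 * (N : ℂ) - 2) * R = 0) ∧
      (C 2 * X * (X + 1) * derivative (derivative R) + C (7 - 4 * (N : ℂ)) * X * derivative R
          + C (2 * l + (n : ℂ) - 4 * (N : ℂ) + 3) * derivative R
          + C (((N : ℂ) - 1) * (2 * (N : ℂ) - 3)) * R = 0) := by
  rintro P Q R rfl rfl rfl
  rcases N with _ | M
  · simp
  simp only [Nat.add_sub_cancel, ← evenGegenbauer.eq_1, ← oddGegenbauer.eq_1, derivative_C_mul]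
  have hP := gegenbauerOperator_evenGegenbauer n (M + 1) l
  have hQ := gegenbauerOperator_oddGegenbauer n M (l - 1)
  have hR := gegenbauerOperator_evenGegenbauer n M (l - 1)
  have hPR := derivative_evenGegenbauer_succ n M l
  have hPQ := X_mul_derivative_evenGegenbauer_succ_sub n M l
  have hQR := two_X_mul_derivative_evenGegenbauer_add n M (l - 1)
  have hQR' := X_mul_derivative_evenGegenbauer n M (l - 1)
  simp only [gegenbauerOperator, map_add, map_sub, map_mul, map_neg, map_natCast, map_ofNat,
    map_one, Nat.cast_add, Nat.cast_one] at *
  set c : ℂ[X] := C l + p - 2 * (M + 1)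
  refine ⟨?_, ?_, ?_, ?_, ?_, ?_⟩
  · linear_combination c * hP
  · linear_combination 2 * c * hPR + 2 * (M + 1) * hQR
  · linear_combination -2 * c * hPR
  · linear_combination 2 * c * hPQ
  · linear_combination -2 * (M + 1) * (2 * C l + n - 2 * (M + 1) - 1) * hQ + 4 * (M + 1) * hQR'
  · linear_combination 2 * (M + 1) * hR

theorem even_singular_vector_system_existence (n : ℕ) (hn : 2 ≤ n) (N : ℕ)
    (p : ℕ) (hp : p ≤ n - 1) (l : ℂ) :
    ∀ P Q R : Polynomial ℂ,
      P = Polynomial.C (l + (p : ℂ) - 2 * (N : ℂ)) *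
            ∑ j ∈ Finset.range (N + 1), Polynomial.C (aC n N j l) * Polynomial.X ^ j →
      Q = Polynomial.C (-(2 * (N : ℂ)) * (2 * l + (n : ℂ) - 2 * (N : ℂ) - 1)) *
            ∑ j ∈ Finset.range N, Polynomial.C (bC n (N - 1) j (l - 1)) * Polynomial.X ^ j →
      R = Polynomial.C (2 * (N : ℂ)) *
            ∑ j ∈ Finset.range N, Polynomial.C (aC n (N - 1) j (l - 1)) * Polynomial.X ^ j →
      (C 2 * X * (X + 1) * derivative (derivative P) + C (3 - 4 * (N : ℂ)) * X * derivative P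
          + C (2 * l + (n : ℂ) - 4 * (N : ℂ) + 1) * derivative P
          + C ((N : ℂ) * (2 * (N : ℂ) - 1)) * P = 0) ∧
      (C 2 * derivative P + C (2 * (N : ℂ) - 1) * Q - C 2 * X * derivative Q
          + C 2 * X * derivative R + C (l + (n : ℂ) - (p : ℂ) - 2 * (N : ℂ) + 1) * R = 0) ∧
      (-(C 2 * derivative P) + C (l + (p : ℂ) - 2 * (N : ℂ)) * R = 0) ∧
      (C 2 * X * derivative P - C (2 * (N : ℂ)) * P
          + C (l + (p : ℂ) - 2 * (N : ℂ)) * Q = 0) ∧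
      (C 2 * X * (X + 1) * derivative (derivative Q) + C (5 - 4 * (N : ℂ)) * X * derivative Q
          + C (2 * l + (n : ℂ) - 4 * (N : ℂ) + 3) * derivative Q
          + C (((N : ℂ) - 1) * (2 * (N : ℂ) - 1)) * Q
          + C 2 * X * derivative R - C (2 * (N : ℂ) - 2) * R = 0) ∧
      (C 2 * X * (X + 1) * derivative (derivative R) + C (7 - 4 * (N : ℂ)) * X * derivative R
          + C (2 * l + (n : ℂ) - 4 * (N : ℂ) + 3) * derivative R
          + C (((N : ℂ) - 1) * (2 * (N : ℂ) - 3)) * R = 0) :=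
  even_singular_vector_system_existence_general n N p l
end

section
/- Main-factorization identity for the β-coefficients at λ = 2N + 1 − k − (n−1)/2 (used in the proof of Theorem 5.8/MainFactOdd1): for every natural number n ≥ 2, all natural numbers N ≥ 1 and k with 1 ≤ k ≤ N, and every i with 0 ≤ i ≤ N: if i > N−k then β_i^{(N)}(2N + 1 − k − (n−1)/2) = 0, and if i ≤ N−k then β_i^{(N)}(2N + 1 − k − (n−1)/2) = β_i^{(N−k)}(2N + 1 − k − (n−1)/2). -/
open Finset Polynomial

/-! With `M = N - k` the point `λ = 2N + 1 - k - (n - 1)/2` satisfies `2λ + n = 2N + 2M + 3`,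
which is symmetric in `N` and `M`. There the second product of `β_i^{(N)}` has the factors
`2M + 2 - 2j`, so it vanishes once `i > M`; for `i ≤ M` the two products are
`(2(N + M - i) + 1)‼ / (2M + 1)‼` and `2^i M! / (M - i)!`, and since
`N! 2^N / (2N + 1)! = 1 / (2N + 1)‼` the whole coefficient becomes a closed form symmetric in
`N` and `M`. -/

open Nat

lemma doubleFactorial_mul_prod_range (M L : ℕ) :
    (2 * M + 1)‼ * ∏ m ∈ range L, (2 * (M + m) + 3) = (2 * (M + L) + 1)‼ := by
  induction L with
  | zero => simp
  | succ L ih =>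
    rw [prod_range_succ, ← mul_assoc, ih,
      show 2 * (M + (L + 1)) + 1 = 2 * (M + L) + 1 + 2 by ring, doubleFactorial_add_two]
    ring

lemma factorial_two_mul_add_one (N : ℕ) : (2 * N + 1)! = (2 * N + 1)‼ * 2 ^ N * N ! := by
  rw [factorial_eq_mul_doubleFactorial, doubleFactorial_two_mul, mul_assoc]

lemma prod_Icc_two_mul_sub_eq_doubleFactorial_div (N M i : ℕ) (hi : i ≤ N) :
    ∏ k ∈ Icc (i + 1) N, (2 * (N + M : ℂ) + 3 - 2 * k) =
      ((2 * (M + (N - i)) + 1)‼ : ℂ) / (2 * M + 1)‼ := by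
  rw [eq_div_iff (Nat.cast_ne_zero.mpr (doubleFactorial_pos _).ne'),
    ← doubleFactorial_mul_prod_range, mul_comm]
  push_cast
  congr 1
  refine prod_nbij' (fun k ↦ N - k) (fun m ↦ N - m) ?_ ?_ ?_ ?_ ?_ <;> intro a ha <;>
    simp only [mem_Icc, mem_range] at ha ⊢
  · omega
  · omega
  · omega
  · omega
  · push_cast [Nat.cast_sub ha.2]
    ring

lemma prod_Icc_two_mul_sub_eq_descFactorial (M i : ℕ) :
    ∏ k ∈ Icc 1 i, (2 * (M : ℂ) + 2 - 2 * k) = 2 ^ i * M.descFactorial i := by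
  induction i with
  | zero => simp
  | succ i ih =>
    rw [prod_Icc_succ_top (by omega), ih, descFactorial_succ]
    rcases le_or_gt i M with hiM | hMi
    · push_cast [Nat.cast_sub hiM]
      ring
    · simp [descFactorial_eq_zero_iff_lt.mpr hMi]

section

variable {n N M i : ℕ} {l : ℂ}

lemma betaC_eq_zero_of_two_mul_add_eq (hl : 2 * l + n = 2 * (N + M : ℂ) + 3) (hi : M < i) :
    betaC n N i l = 0 := by
  have hmem : M + 1 ∈ Icc 1 i := mem_Icc.mpr ⟨by omega, hi⟩
  rw [betaC, prod_eq_zero hmem (by push_cast; linear_combination hl), mul_zero]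

lemma betaC_eq_of_two_mul_add_eq (hl : 2 * l + n = 2 * (N + M : ℂ) + 3) (hiN : i ≤ N)
    (hiM : i ≤ M) :
    betaC n N i l = (-2) ^ i * N ! * M ! * (2 * (N + M - i) + 1)‼ /
      ((2 * N + 1)‼ * (2 * M + 1)‼ * i ! * (N - i)! * (M - i)! : ℂ) := by
  have hfirst : ∏ k ∈ Icc (i + 1) N, (2 * l + n - 2 * k) =
      ((2 * (M + (N - i)) + 1)‼ : ℂ) / (2 * M + 1)‼ := by
    rw [← prod_Icc_two_mul_sub_eq_doubleFactorial_div N M i hiN, hl]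
  have hsecond : ∏ k ∈ Icc 1 i, (2 * l + n - 2 * k - 2 * N - 1) =
      2 ^ i * M.descFactorial i := by
    rw [← prod_Icc_two_mul_sub_eq_descFactorial]
    exact prod_congr rfl fun k _ ↦ by linear_combination hl
  have hdesc : (M.descFactorial i : ℂ) = M ! / (M - i)! := by
    rw [eq_div_iff (Nat.cast_ne_zero.mpr (factorial_ne_zero _)), mul_comm, ← Nat.cast_mul,
      factorial_mul_descFactorial hiM]
  rw [betaC, hfirst, hsecond, hdesc, Nat.cast_choose ℂ hiN, factorial_two_mul_add_one,
    show N + M - i = M + (N - i) by omega, neg_pow (2 : ℂ)]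
  push_cast
  field_simp

lemma betaC_swap_of_two_mul_add_eq (hl : 2 * l + n = 2 * (N + M : ℂ) + 3) (hiN : i ≤ N)
    (hiM : i ≤ M) : betaC n N i l = betaC n M i l := by
  rw [betaC_eq_of_two_mul_add_eq hl hiN hiM,
    betaC_eq_of_two_mul_add_eq (by linear_combination hl) hiM hiN, add_comm M N]
  ring

end

theorem beta_main_factorization_second_general (n : ℕ) (N k : ℕ) (hkN : k ≤ N) (i : ℕ) :
    (N - k < i → betaC n N i (2 * (N : ℂ) + 1 - (k : ℂ) - ((n : ℂ) - 1) / 2) = 0) ∧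
    (i ≤ N - k → betaC n N i (2 * (N : ℂ) + 1 - (k : ℂ) - ((n : ℂ) - 1) / 2)
        = betaC n (N - k) i (2 * (N : ℂ) + 1 - (k : ℂ) - ((n : ℂ) - 1) / 2)) := by
  have hl : 2 * (2 * (N : ℂ) + 1 - k - ((n : ℂ) - 1) / 2) + n =
      2 * (N + (N - k : ℕ) : ℂ) + 3 := by
    push_cast [Nat.cast_sub hkN]
    ring
  exact ⟨betaC_eq_zero_of_two_mul_add_eq hl,
    fun hi ↦ betaC_swap_of_two_mul_add_eq hl (by omega) hi⟩

theorem beta_main_factorization_second (n : ℕ) (hn : 2 ≤ n) (N k : ℕ) (hN : 1 ≤ N)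
    (hk1 : 1 ≤ k) (hkN : k ≤ N) (i : ℕ) (hi : i ≤ N) :
    (N - k < i → betaC n N i (2 * (N : ℂ) + 1 - (k : ℂ) - ((n : ℂ) - 1) / 2) = 0) ∧
    (i ≤ N - k → betaC n N i (2 * (N : ℂ) + 1 - (k : ℂ) - ((n : ℂ) - 1) / 2)
        = betaC n (N - k) i (2 * (N : ℂ) + 1 - (k : ℂ) - ((n : ℂ) - 1) / 2)) :=
  beta_main_factorization_second_general n N k hkN i
end
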